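/- Uniform-weight PWT: let o ∈ {0, ..., n−1} satisfy o ≥ w_{e_{o+1}}. If s is a feasible solution (|s| ≤ C) with |s| ≥ o + 1 and j ∈ s is an item with index j ≥ o + 1, then B(s \ {j}) ≥ B(s), i.e. removing any item of index larger than o does not decrease the benefit. -/
import Mathlib
set_option maxHeartbeats 1000000


/-- Total profit of a solution (subset of items). -/
noncomputable def pwtP (p : ℕ → ℝ) (s : Finset ℕ) : ℝ := ∑ i ∈ s, p i

/-- Benefit of a solution in the uniform-weight PWT: all weights are 1,
so the weight of `s` is its cardinality. -/
noncomputable def pwtBu (p : ℕ → ℝ) (R d vmax ν : ℝ) (s : Finset ℕ) : ℝ :=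
  pwtP p s - R * d / (vmax - ν * (s.card : ℝ))

/-- Threshold `w_{e_i}` of item `i` in the uniform-weight PWT. -/
noncomputable def pwtThrU (p : ℕ → ℝ) (R d vmax ν : ℝ) (i : ℕ) : ℝ :=
  vmax / ν - (1 / 2) * (1 + Real.sqrt (1 + 4 * R * d / (ν * p i)))

theorem pwt_uniform_remove_second_block_improves
    (n : ℕ) (p : ℕ → ℝ) (R d vmin vmax C ν : ℝ)
    (hp : ∀ j ∈ Finset.Icc 1 n, 0 < p j)
    (hpm : ∀ i j, 1 ≤ i → i < j → j ≤ n → p j < p i)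
    (hR : 0 < R) (hd : 0 < d) (hvmin : 0 < vmin) (hv : vmin < vmax)
    (hC : 0 < C) (hν : ν = (vmax - vmin) / C)
    (o : ℕ) (ho : o < n)
    (hothr : pwtThrU p R d vmax ν (o + 1) ≤ (o : ℝ))
    (s : Finset ℕ) (hs : s ⊆ Finset.Icc 1 n)
    (hfeas : (s.card : ℝ) ≤ C) (hcard : o + 1 ≤ s.card)
    (j : ℕ) (hjs : j ∈ s) (hj : o + 1 ≤ j) :
    pwtBu p R d vmax ν s ≤ pwtBu p R d vmax ν (s.erase j) := by
  have hν0 : 0 < ν := by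
    rw [hν]; exact div_pos (by linarith) hC
  set k : ℝ := (s.card : ℝ) with hkdef
  have hk : (o : ℝ) + 1 ≤ k := by simp only [hkdef]; exact_mod_cast hcard
  have hνC : ν * C = vmax - vmin := by
    rw [hν]; field_simp
  -- a = weight denom of s, b = of erase
  set a : ℝ := vmax - ν * k with hadef
  set b : ℝ := vmax - ν * (k - 1) with hbdef
  have ha0 : 0 < a := by
    have : ν * k ≤ ν * C := by
      exact mul_le_mul_of_nonneg_left hfeas hν0.le
    have := this.trans_eq hνC
    simp only [hadef]; linarith
  have hb0 : 0 < b := by simp only [hbdef]; nlinarith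
  set A : ℝ := vmax - ν * ((o : ℝ) + 1) with hAdef
  set B0 : ℝ := vmax - ν * (o : ℝ) with hBdef
  have haA : a ≤ A := by
    simp only [hadef, hAdef]; nlinarith
  have hbB : b ≤ B0 := by
    simp only [hbdef, hBdef]; nlinarith
  have hA0 : 0 < A := lt_of_lt_of_le ha0 haA
  have hB0 : 0 < B0 := lt_of_lt_of_le hb0 hbB
  -- bounds on j
  have hjn : j ∈ Finset.Icc 1 n := hs hjs
  have hjn' : j ≤ n := (Finset.mem_Icc.mp hjn).2
  have hon : o + 1 ≤ n := ho
  have hpo : 0 < p (o + 1) := hp _ (Finset.mem_Icc.mpr ⟨Nat.le_add_left 1 o, hon⟩)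
  have hpj0 : 0 < p j := hp _ hjn
  have hpjo : p j ≤ p (o + 1) := by
    rcases eq_or_lt_of_le hj with h | h
    · rw [← h]
    · exact (hpm (o + 1) j (Nat.le_add_left 1 o) h hjn').le
  -- threshold computation
  set q : ℝ := p (o + 1) with hqdef
  have hkey : q * A * B0 ≤ R * d * ν := by
    have hX : (0 : ℝ) ≤ 1 + 4 * R * d / (ν * q) := by positivity
    have hthr := hothr
    unfold pwtThrU at hthr
    rw [← hqdef] at hthr
    set t : ℝ := vmax / ν - (o : ℝ) with htdef
    have hsqrt : 2 * t - 1 ≤ Real.sqrt (1 + 4 * R * d / (ν * q)) := by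
      simp only [htdef]; nlinarith
    have htA : A = ν * (t - 1) := by
      simp only [hAdef, htdef]; field_simp; ring
    have htB : B0 = ν * t := by
      simp only [hBdef, htdef]; field_simp
    have ht1 : 0 < t - 1 := by nlinarith
    have h2t : 0 ≤ 2 * t - 1 := by nlinarith
    have hsq : (2 * t - 1) ^ 2 ≤ 1 + 4 * R * d / (ν * q) := by
      calc (2 * t - 1) ^ 2 ≤ (Real.sqrt (1 + 4 * R * d / (ν * q))) ^ 2 :=
            pow_le_pow_left₀ h2t hsqrt 2
        _ = 1 + 4 * R * d / (ν * q) := Real.sq_sqrt hX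
    have hq0 : (0:ℝ) < ν * q := by positivity
    have h3 : (t ^ 2 - t) * (ν * q) ≤ R * d := by
      have hdiv4 : 4 * R * d / (ν * q) = 4 * (R * d / (ν * q)) := by ring
      rw [hdiv4] at hsq
      have h2 : t ^ 2 - t ≤ R * d / (ν * q) := by nlinarith [hsq]
      have := mul_le_mul_of_nonneg_right h2 hq0.le
      rwa [div_mul_cancel₀ _ (ne_of_gt hq0)] at this
    rw [htA, htB]
    nlinarith
  -- main bound on p j
  have hpjab : p j * a * b ≤ R * d * ν := by
    calc p j * a * b ≤ q * A * B0 :=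
          mul_le_mul (mul_le_mul hpjo haA ha0.le hpo.le) hbB hb0.le
            (mul_nonneg hpo.le hA0.le)
      _ ≤ R * d * ν := hkey
  have hpjle : p j ≤ R * d / a - R * d / b := by
    have hdiff : R * d / a - R * d / b = R * d * ν / (a * b) := by
      have hba : b - a = ν := by simp only [hadef, hbdef]; ring
      field_simp
      linear_combination R * d * hba
    rw [hdiff]
    rw [le_div_iff₀ (by positivity)]
    nlinarith
  -- assemble
  unfold pwtBu pwtP
  have hsum : ∑ i ∈ s.erase j, p i = (∑ i ∈ s, p i) - p j :=
    Finset.sum_erase_eq_sub hjs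
  have hcard' : ((s.erase j).card : ℝ) = k - 1 := by
    rw [Finset.card_erase_of_mem hjs]
    have h1 : 1 ≤ s.card := le_trans (Nat.le_add_left 1 o) hcard
    push_cast [h1]
    ring
  rw [hsum, hcard']
  have : R * d / (vmax - ν * (k - 1)) = R * d / b := rfl
  simp only [← hadef, ← hbdef]
  linarith
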